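/- arXiv:1701.02207 — 2 statements merged into one kernel-verified Lean document; each statement's English description precedes it below -/
import Mathlib

section
/- With the notation of the sets A[u] (sums a₁p^{−n₁}+⋯+a_u p^{−n_u} with 0 = n₁ ≤ ⋯ ≤ n_u integers and integer coefficients a_i ∈ [0, w*)): for any real β not in A[u], the infimum inf{|β − α| : α ∈ A[u]} is strictly positive. -/
/-- The set `A[u]` of sums `a₁p^{-n₁} + ⋯ + a_u p^{-n_u}` with `0 = n₁ ≤ ⋯ ≤ n_u`
integers and each `a_i` an integer in `[0, w)`. -/
def Aset (p u : ℕ) (w : ℝ) : Set ℝ :=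
  {x | ∃ (n : Fin u → ℕ) (a : Fin u → ℤ),
    Monotone n ∧ (∀ h : 0 < u, n ⟨0, h⟩ = 0) ∧
    (∀ i, 0 ≤ a i ∧ (a i : ℝ) < w) ∧
    x = ∑ i, (a i : ℝ) * (p : ℝ) ^ (-(n i : ℤ))}

/-- Like `Aset` but without the requirement `n₁ = 0`. -/
def Bset (p u : ℕ) (w : ℝ) : Set ℝ :=
  {x | ∃ (n : Fin u → ℕ) (a : Fin u → ℤ),
    Monotone n ∧
    (∀ i, 0 ≤ a i ∧ (a i : ℝ) < w) ∧
    x = ∑ i, (a i : ℝ) * (p : ℝ) ^ (-(n i : ℤ))}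

lemma Aset_subset_Bset (p u : ℕ) (w : ℝ) : Aset p u w ⊆ Bset p u w := by
  rintro x ⟨n, a, hn, _, ha, hx⟩
  exact ⟨n, a, hn, ha, hx⟩

lemma zero_mem_Aset (p u : ℕ) (w : ℝ) (hw : 0 < w) : (0 : ℝ) ∈ Aset p u w := by
  exact ⟨fun _ => 0, fun _ => 0, monotone_const, fun _ => rfl,
    fun i => ⟨le_refl 0, by simpa using hw⟩, by simp⟩

lemma Aset_zero (p : ℕ) (w : ℝ) (hw : 0 < w) : Aset p 0 w = {0} := by
  ext x
  constructor
  · rintro ⟨n, a, -, -, -, hx⟩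
    simp [hx]
  · intro h
    rw [Set.mem_singleton_iff] at h
    subst h
    exact zero_mem_Aset p 0 w hw

lemma Bset_subset_Icc (p u : ℕ) (hp : 1 ≤ p) (w : ℝ) (hw : 0 ≤ w) :
    Bset p u w ⊆ Set.Icc 0 (u * w) := by
  rintro x ⟨n, a, hn, ha, hx⟩
  have hp1 : (1:ℝ) ≤ (p:ℝ) := by exact_mod_cast hp
  have hterm : ∀ i : Fin u, (0:ℝ) ≤ (a i : ℝ) * (p : ℝ) ^ (-(n i : ℤ)) ∧
      (a i : ℝ) * (p : ℝ) ^ (-(n i : ℤ)) ≤ w := by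
    intro i
    have h0 : (0:ℝ) ≤ (a i : ℝ) := by exact_mod_cast (ha i).1
    have hz0 : (0:ℝ) ≤ (p : ℝ) ^ (-(n i : ℤ)) := by positivity
    have hz1 : (p : ℝ) ^ (-(n i : ℤ)) ≤ 1 := by
      apply zpow_le_one_of_nonpos₀ hp1
      simp
    constructor
    · exact mul_nonneg h0 hz0
    · calc (a i : ℝ) * (p : ℝ) ^ (-(n i : ℤ)) ≤ (a i : ℝ) * 1 :=
            mul_le_mul_of_nonneg_left hz1 h0
        _ = (a i : ℝ) := mul_one _
        _ ≤ w := le_of_lt (ha i).2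
  constructor
  · rw [hx]; exact Finset.sum_nonneg fun i _ => (hterm i).1
  · rw [hx]
    calc ∑ i, (a i : ℝ) * (p : ℝ) ^ (-(n i : ℤ)) ≤ ∑ _i : Fin u, w :=
          Finset.sum_le_sum fun i _ => (hterm i).2
      _ = u * w := by simp [mul_comm]

lemma mem_Aset_succ_iff (p u : ℕ) (w : ℝ) (x : ℝ) :
    x ∈ Aset p (u + 1) w ↔
      ∃ a₀ : ℤ, (0 ≤ a₀ ∧ (a₀ : ℝ) < w) ∧ x - a₀ ∈ Bset p u w := by
  constructor
  · rintro ⟨n, a, hn, hn0, ha, hx⟩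
    refine ⟨a 0, ha 0, fun i => n i.succ, fun i => a i.succ,
      fun i j hij => hn (Fin.succ_le_succ_iff.mpr hij), fun i => ha _, ?_⟩
    have h0 : n 0 = 0 := hn0 (Nat.succ_pos u)
    rw [hx, Fin.sum_univ_succ, h0]
    simp
  · rintro ⟨a₀, ha₀, n, a, hn, ha, hx⟩
    refine ⟨Fin.cons 0 n, Fin.cons a₀ a, ?_, fun _ => rfl, ?_, ?_⟩
    · intro i j hij
      induction i using Fin.cases with
      | zero =>
        simp only [Fin.cons_zero]
        exact Nat.zero_le _
      | succ i' =>
        induction j using Fin.cases with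
        | zero =>
          exact absurd hij (by simp [Fin.le_def])
        | succ j' =>
          simp only [Fin.cons_succ]
          exact hn (Fin.succ_le_succ_iff.mp hij)
    · intro i
      induction i using Fin.cases with
      | zero => simpa using ha₀
      | succ i' => simpa using ha i'
    · rw [Fin.sum_univ_succ]
      simp only [Fin.cons_zero, Fin.cons_succ, CharP.cast_eq_zero, Nat.cast_zero, neg_zero,
        zpow_zero, mul_one]
      have := hx
      linarith [hx]

lemma mem_Bset_succ_iff (p u : ℕ) (hp : p ≠ 0) (w : ℝ) (x : ℝ) :
    x ∈ Bset p (u + 1) w ↔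
      ∃ m : ℕ, (p : ℝ) ^ m * x ∈ Aset p (u + 1) w := by
  have hp0 : (p:ℝ) ≠ 0 := Nat.cast_ne_zero.mpr hp
  constructor
  · rintro ⟨n, a, hn, ha, hx⟩
    refine ⟨n 0, fun i => n i - n 0, a, ?_, ?_, ha, ?_⟩
    · intro i j hij
      exact Nat.sub_le_sub_right (hn hij) _
    · intro _; simp
    · rw [hx, Finset.mul_sum]
      refine Finset.sum_congr rfl fun i _ => ?_
      have hle : n 0 ≤ n i := hn (Fin.zero_le i)
      have hpow : (p:ℝ) ^ (n 0 : ℕ) * (p:ℝ) ^ (-(n i : ℤ)) =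
          (p:ℝ) ^ (-((n i - n 0 : ℕ) : ℤ)) := by
        rw [← zpow_natCast (p:ℝ) (n 0), ← zpow_add₀ hp0]
        congr 1
        omega
      rw [← hpow]
      ring
  · rintro ⟨m, n, a, hn, _, ha, hx⟩
    refine ⟨fun i => n i + m, a, fun i j hij => Nat.add_le_add_right (hn hij) m, ha, ?_⟩
    have hxx : x = ((p:ℝ) ^ m)⁻¹ * ((p:ℝ) ^ m * x) := by
      field_simp
    rw [hxx, hx, Finset.mul_sum]
    refine Finset.sum_congr rfl fun i _ => ?_
    have hpow : ((p:ℝ) ^ m)⁻¹ * (p:ℝ) ^ (-(n i : ℤ)) =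
        (p:ℝ) ^ (-((n i + m : ℕ) : ℤ)) := by
      rw [← zpow_natCast (p:ℝ) m, ← zpow_neg, ← zpow_add₀ hp0]
      congr 1
      push_cast
      ring
    rw [← hpow]
    ring

lemma isClosed_Aset_succ (p u : ℕ) (hp : p.Prime) (w : ℝ) (hw : 0 < w)
    (ih : IsClosed (Bset p u w)) : IsClosed (Aset p (u + 1) w) := by
  have heq : Aset p (u + 1) w =
      ⋃ a₀ ∈ {a : ℤ | 0 ≤ a ∧ (a : ℝ) < w}, (fun x => x - (a₀ : ℝ)) ⁻¹' Bset p u w := by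
    ext x
    simp only [Set.mem_iUnion, Set.mem_preimage, Set.mem_setOf_eq, exists_prop]
    rw [mem_Aset_succ_iff]
  rw [heq]
  refine Set.Finite.isClosed_biUnion ?_ ?_
  · apply Set.Finite.subset (Set.finite_Icc (0:ℤ) ⌈w⌉)
    rintro a ⟨h1, h2⟩
    refine ⟨h1, ?_⟩
    have : (a:ℝ) ≤ (⌈w⌉ : ℝ) := le_trans (le_of_lt h2) (Int.le_ceil w)
    exact_mod_cast this
  · intro a _
    exact IsClosed.preimage (continuous_sub_right _) ih

lemma isClosed_Bset (p : ℕ) (hp : p.Prime) (w : ℝ) (hw : 0 < w) (u : ℕ) :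
    IsClosed (Bset p u w) := by
  induction u with
  | zero =>
    have : Bset p 0 w = {0} := by
      ext x
      constructor
      · rintro ⟨n, a, -, -, hx⟩
        simp [hx]
      · intro h
        rw [Set.mem_singleton_iff] at h
        subst h
        exact Aset_subset_Bset p 0 w (zero_mem_Aset p 0 w hw)
    rw [this]
    exact isClosed_singleton
  | succ u ih =>
    have hA : IsClosed (Aset p (u + 1) w) := isClosed_Aset_succ p u hp w hw ih
    have hp1 : (1:ℝ) < (p:ℝ) := by exact_mod_cast hp.one_lt
    have hp0 : (0:ℝ) < (p:ℝ) := lt_trans one_pos hp1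
    set C : ℝ := (u + 1 : ℕ) * w with hC
    have hC0 : 0 ≤ C := by positivity
    have hAC : Aset p (u + 1) w ⊆ Set.Icc 0 C :=
      fun x hx => Bset_subset_Icc p (u+1) hp.one_lt.le w hw.le (Aset_subset_Bset p (u+1) w hx)
    set S : ℕ → Set ℝ := fun m => (fun x => (p:ℝ) ^ m * x) ⁻¹' Aset p (u + 1) w with hS
    have hSclosed : ∀ m, IsClosed (S m) :=
      fun m => hA.preimage (continuous_const.mul continuous_id)
    have hSsub : ∀ m, ∀ y ∈ S m, 0 ≤ y ∧ (p:ℝ) ^ m * y ≤ C := by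
      intro m y hy
      have h : 0 ≤ (p:ℝ) ^ m * y ∧ (p:ℝ) ^ m * y ≤ C := hAC hy
      have hpm : (0:ℝ) < (p:ℝ) ^ m := pow_pos hp0 m
      constructor
      · by_contra hneg
        push_neg at hneg
        nlinarith [h.1]
      · exact h.2
    have heq : Bset p (u + 1) w = ⋃ m : ℕ, S m := by
      ext x
      rw [mem_Bset_succ_iff p u hp.ne_zero w x]
      simp [hS]
    rw [heq]
    apply isClosed_of_closure_subset
    intro x hx
    have hnonneg : 0 ≤ x := by
      have hsub : (⋃ m : ℕ, S m) ⊆ Set.Ici (0:ℝ) := by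
        rintro y ⟨s, ⟨m, rfl⟩, hy⟩
        exact (hSsub m y hy).1
      exact (closure_minimal hsub isClosed_Ici) hx
    rcases eq_or_lt_of_le hnonneg with h0 | hpos
    · refine Set.mem_iUnion.mpr ⟨0, ?_⟩
      simp only [hS, Set.mem_preimage, pow_zero, one_mul, ← h0]
      exact zero_mem_Aset p (u+1) w hw
    · -- choose M with C < x * p^M
      obtain ⟨M, hM⟩ : ∃ M : ℕ, C / x < (p:ℝ) ^ M := pow_unbounded_of_one_lt (C / x) hp1
      have hCx : C < x * (p:ℝ) ^ M := by
        rw [div_lt_iff₀ hpos] at hM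
        linarith [hM]
      have hpM : (0:ℝ) < (p:ℝ) ^ M := pow_pos hp0 M
      set T₁ : Set ℝ := ⋃ m ∈ Set.Iio M, S m with hT₁
      set T₂ : Set ℝ := Set.Icc 0 (C / (p:ℝ) ^ M) with hT₂
      have hsub : (⋃ m : ℕ, S m) ⊆ T₁ ∪ T₂ := by
        rintro y ⟨s, ⟨m, rfl⟩, hy⟩
        by_cases hm : m < M
        · exact Or.inl (Set.mem_biUnion hm hy)
        · right
          push_neg at hm
          obtain ⟨hy0, hyC⟩ := hSsub m y hy
          refine ⟨hy0, ?_⟩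
          have hmono : (p:ℝ) ^ M ≤ (p:ℝ) ^ m := pow_le_pow_right₀ hp1.le hm
          rw [le_div_iff₀ hpM]
          nlinarith
      have hT₁closed : IsClosed T₁ :=
        Set.Finite.isClosed_biUnion (Set.finite_Iio M) fun m _ => hSclosed m
      have hT₂closed : IsClosed T₂ := isClosed_Icc
      have hx' : x ∈ T₁ ∪ T₂ :=
        closure_minimal hsub (hT₁closed.union hT₂closed) hx
      rcases hx' with hx1 | hx2
      · obtain ⟨s, ⟨m, rfl⟩, hm⟩ := hx1
        obtain ⟨_, hmem⟩ := Set.mem_iUnion.mp hm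
        exact Set.mem_iUnion.mpr ⟨m, hmem⟩
      · exfalso
        have : x ≤ C / (p:ℝ) ^ M := hx2.2
        rw [le_div_iff₀ hpM] at this
        linarith
    
theorem isClosed_Aset (p : ℕ) (hp : p.Prime) (u : ℕ) (w : ℝ) (hw : 0 < w) :
    IsClosed (Aset p u w) := by
  cases u with
  | zero => rw [Aset_zero p w hw]; exact isClosed_singleton
  | succ u => exact isClosed_Aset_succ p u hp w hw (isClosed_Bset p hp w hw u)

/-- For any real `β ∉ A[u]`, the distance `inf{|β - α| : α ∈ A[u]}` is strictly positive. -/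
theorem stmt3 (p : ℕ) (hp : p.Prime) (u : ℕ) (w : ℝ) (hw : 0 < w)
    (β : ℝ) (hβ : β ∉ Aset p u w) :
    ∃ ε > (0 : ℝ), ∀ α ∈ Aset p u w, ε ≤ |β - α| := by
  have hcl := isClosed_Aset p hp u w hw
  have hopen : IsOpen (Aset p u w)ᶜ := hcl.isOpen_compl
  obtain ⟨ε, hε, hball⟩ := Metric.isOpen_iff.mp hopen β hβ
  refine ⟨ε, hε, fun α hα => ?_⟩
  by_contra h
  push_neg at h
  have : α ∈ Metric.ball β ε := by
    rw [Metric.mem_ball, Real.dist_eq, abs_sub_comm]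
    exact h
  exact (hball this) hα
end

section
/- With the structural constants η satisfying the shuffle identities above, define η^o by the inversion relations Σ_{0 ≤ s₁ ≤ s} η(1,…,s₁)·η^o(s₁+1,…,s) = δ_{0s} (Kronecker delta) for all 0 ≤ s < p, with η(∅) = η^o(∅) = 1. Then η^o(1,…,s) = (−1)^s η(s, s−1, …, 1). -/
/-- The list of all shuffles (interleavings) of two lists. -/
def shuffles {α : Type*} : List α → List α → List (List α)
  | [], l₂ => [l₂]
  | l₁, [] => [l₁]
  | a :: l₁, b :: l₂ =>
      ((shuffles l₁ (b :: l₂)).map (a :: ·)) ++ ((shuffles (a :: l₁) l₂).map (b :: ·))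

lemma shuffles_nil_right {α : Type*} (l : List α) : shuffles l [] = [l] := by
  cases l <;> simp [shuffles]

section
variable {k : Type*} [Field k]

/-- `Tconv η u v = ∑ (-1)^i η(rev(v.take i) ++ u) η(v.drop i)` -/
def Tconv (η : List ℕ → k) (u v : List ℕ) : k :=
  ∑ i ∈ Finset.range (v.length + 1),
    (-1 : k) ^ i * η ((v.take i).reverse ++ u) * η (v.drop i)

lemma Tconv_nil (η : List ℕ → k) (u : List ℕ) : Tconv η u [] = η u * η [] := by
  simp [Tconv]

lemma Tconv_cons (η : List ℕ → k) (u : List ℕ) (b : ℕ) (w : List ℕ) :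
    Tconv η u (b :: w) = η u * η (b :: w) - Tconv η (b :: u) w := by
  unfold Tconv
  rw [show (b :: w).length + 1 = w.length + 1 + 1 by simp, Finset.sum_range_succ']
  simp only [List.take_succ_cons, List.drop_succ_cons, List.reverse_cons,
    List.append_assoc, List.singleton_append, pow_succ, pow_zero, List.take_zero,
    List.reverse_nil, List.nil_append, List.drop_zero, one_mul]
  rw [Finset.sum_congr rfl (fun x _ => by ring :
    ∀ x ∈ Finset.range (w.length + 1), (-1:k) ^ x * -1 * η ((List.take x w).reverse ++ b :: u)
      * η (List.drop x w) = -((-1:k) ^ x * η ((List.take x w).reverse ++ b :: u) * η (List.drop x w))),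
    Finset.sum_neg_distrib]
  ring

lemma Tconv_claim (p : ℕ) (η : List ℕ → k)
    (hshuffle : ∀ l₁ l₂ : List ℕ, l₁.length + l₂.length < p →
      η l₁ * η l₂ = ((shuffles l₁ l₂).map η).sum) :
    ∀ (v u : List ℕ) (a : ℕ), u.length + 1 + v.length < p →
      Tconv η (a :: u) v = ((shuffles u v).map (fun x => η (a :: x))).sum := by
  intro v
  induction v with
  | nil =>
    intro u a h
    rw [Tconv_nil, shuffles_nil_right]
    have := hshuffle (a :: u) [] (by simpa using h)
    rw [shuffles_nil_right] at this
    simpa using this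
  | cons b w ih =>
    intro u a h
    rw [Tconv_cons, ih (a :: u) b (by simp at h ⊢; omega)]
    rw [hshuffle (a :: u) (b :: w) (by simp at h ⊢; omega)]
    have hs : shuffles (a :: u) (b :: w)
        = ((shuffles u (b :: w)).map (a :: ·)) ++ ((shuffles (a :: u) w).map (b :: ·)) := by
      simp [shuffles]
    rw [hs, List.map_append, List.sum_append, List.map_map, List.map_map]
    simp only [Function.comp_def]
    ring

lemma Tconv_key (p : ℕ) (η : List ℕ → k) (hηnil : η [] = 1)
    (hshuffle : ∀ l₁ l₂ : List ℕ, l₁.length + l₂.length < p →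
      η l₁ * η l₂ = ((shuffles l₁ l₂).map η).sum) :
    ∀ l : List ℕ, l.length < p → Tconv η [] l = if l = [] then 1 else 0 := by
  intro l hl
  cases l with
  | nil => simp [Tconv_nil, hηnil]
  | cons b w =>
    rw [Tconv_cons, Tconv_claim p η hshuffle w [] b (by simp at hl ⊢; omega)]
    simp [shuffles, hηnil]

lemma triangle (n : ℕ) (g : ℕ → ℕ → k) :
    ∑ i ∈ Finset.range (n + 1), ∑ j ∈ Finset.range (n - i + 1), g i (i + j)
      = ∑ m ∈ Finset.range (n + 1), ∑ i ∈ Finset.range (m + 1), g i m := by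
  rw [Finset.sum_sigma', Finset.sum_sigma']
  apply Finset.sum_nbij' (i := fun q => (⟨q.1 + q.2, q.1⟩ : Σ _ : ℕ, ℕ))
    (j := fun q => (⟨q.2, q.1 - q.2⟩ : Σ _ : ℕ, ℕ))
  · intro q hq; simp only [Finset.mem_sigma, Finset.mem_range] at hq ⊢; omega
  · intro q hq; simp only [Finset.mem_sigma, Finset.mem_range] at hq ⊢; omega
  · intro q hq; simp only [Finset.mem_sigma, Finset.mem_range] at hq
    ext <;> simp <;> omega
  · intro q hq; simp only [Finset.mem_sigma, Finset.mem_range] at hq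
    ext <;> simp <;> omega
  · intro q hq; rfl

end

/-- If `η` satisfies the shuffle identities and `η^o` is defined by the inversion
relations `Σ_{0 ≤ s₁ ≤ s} η(1,…,s₁)·η^o(s₁+1,…,s) = δ_{0s}`, then
`η^o(1,…,s) = (-1)^s η(s, s-1, …, 1)`. -/
theorem stmt13 (p : ℕ) (hp : p.Prime) (k : Type*) [Field k] [CharP k p]
    (η ηo : List ℕ → k)
    (hηnil : η [] = 1) (hηonil : ηo [] = 1) (hη1 : ∀ a : ℕ, η [a] = 1)
    (hshuffle : ∀ l₁ l₂ : List ℕ, l₁.length + l₂.length < p →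
      η l₁ * η l₂ = ((shuffles l₁ l₂).map η).sum)
    (hinv : ∀ l : List ℕ, l.length < p →
      (∑ i ∈ Finset.range (l.length + 1), η (l.take i) * ηo (l.drop i)) =
        if l = [] then 1 else 0) :
    ∀ l : List ℕ, l.length < p → (∀ x ∈ l, 0 < x) →
      ηo l = (-1 : k) ^ l.length * η l.reverse := by
  intro l hl _
  set n := l.length with hn
  -- the double "associativity" sum
  set S : k := ∑ i ∈ Finset.range (n + 1), (-1 : k) ^ i * η ((l.take i).reverse) *
      (∑ j ∈ Finset.range ((l.drop i).length + 1),
        η ((l.drop i).take j) * ηo ((l.drop i).drop j)) with hS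
  -- first evaluation: S = (-1)^n * η l.reverse
  have h1 : S = (-1 : k) ^ n * η l.reverse := by
    rw [hS, Finset.sum_congr rfl (g := fun i =>
        if i = n then (-1 : k) ^ n * η l.reverse else 0)]
    · rw [Finset.sum_ite_eq']
      simp
    · intro i hi
      rw [Finset.mem_range] at hi
      rw [hinv (l.drop i) (by simp [hn] at *; omega)]
      by_cases h : i = n
      · subst h
        simp [List.drop_eq_nil_iff, List.take_of_length_le, hn.symm.le]
      · have : ¬ (l.drop i = []) := by
          rw [List.drop_eq_nil_iff]; omega
        simp [this, h]
  -- second evaluation: S = ηo l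
  have h2 : S = ηo l := by
    rw [hS]
    have hrw : ∀ i ∈ Finset.range (n + 1),
        (-1 : k) ^ i * η ((l.take i).reverse) *
          (∑ j ∈ Finset.range ((l.drop i).length + 1),
            η ((l.drop i).take j) * ηo ((l.drop i).drop j))
        = ∑ j ∈ Finset.range (n - i + 1),
            (fun i' m => (-1 : k) ^ i' * η ((l.take i').reverse) *
              (η ((l.take m).drop i') * ηo (l.drop m))) i (i + j) := by
      intro i hi
      rw [Finset.mem_range] at hi
      rw [Finset.mul_sum]
      have hlen : (l.drop i).length = n - i := by simp [hn]
      rw [hlen]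
      refine Finset.sum_congr rfl fun j hj => ?_
      have e1 : (l.drop i).take j = (l.take (i + j)).drop i := by
        rw [List.drop_take]; congr 1; omega
      have e2 : (l.drop i).drop j = l.drop (i + j) := by
        rw [List.drop_drop]
      rw [e1, e2]
    rw [Finset.sum_congr rfl hrw, triangle n
      (fun i' m => (-1 : k) ^ i' * η ((l.take i').reverse) *
        (η ((l.take m).drop i') * ηo (l.drop m)))]
    have hrw2 : ∀ m ∈ Finset.range (n + 1),
        (∑ i ∈ Finset.range (m + 1),
          (-1 : k) ^ i * η ((l.take i).reverse) * (η ((l.take m).drop i) * ηo (l.drop m)))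
        = (if m = 0 then (1 : k) else 0) * ηo (l.drop m) := by
      intro m hm
      rw [Finset.mem_range] at hm
      have : (∑ i ∈ Finset.range (m + 1),
          (-1 : k) ^ i * η ((l.take i).reverse) * (η ((l.take m).drop i) * ηo (l.drop m)))
          = Tconv η [] (l.take m) * ηo (l.drop m) := by
        rw [Tconv, Finset.sum_mul]
        have hlt : (l.take m).length = m := by simp [hn]; omega
        rw [hlt]
        refine Finset.sum_congr rfl fun i hi => ?_
        rw [Finset.mem_range] at hi
        have : (l.take m).take i = l.take i := by
          rw [List.take_take]; congr 1; omega
        rw [this, List.append_nil]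
        ring
      rw [this, Tconv_key p η hηnil hshuffle (l.take m) (by simp [hn] at *; omega)]
      congr 1
      by_cases hm0 : m = 0
      · simp [hm0]
      · have : ¬ (l.take m = []) := by
          simp [List.take_eq_nil_iff, hm0]
          intro h
          simp [h] at hn
          omega
        simp [this, hm0]
    rw [Finset.sum_congr rfl hrw2]
    rw [Finset.sum_congr rfl (g := fun m => if m = 0 then ηo (l.drop m) else 0)
      (fun m _ => by by_cases h : m = 0 <;> simp [h])]
    rw [Finset.sum_ite_eq']
    simp
  rw [← h2, h1, hn]
end
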